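/- Let (A, [·,·]_A) be a finite-dimensional left-Alia algebra over a field K and (A*, [·,·]_{A*}) a left-Alia algebra structure on its dual space. Then there is a Manin triple of left-Alia algebras ((A ⊕ A*, [·,·]_d, B_d), A, A*) — i.e. a left-Alia algebra structure [·,·]_d on A ⊕ A* containing (A,[·,·]_A) and (A*,[·,·]_{A*}) as subalgebras such that the bilinear form B_d(x + a*, y + b*) = ⟨x, b*⟩ + ⟨a*, y⟩ satisfies the invariance B_d([u,v]_d, w) = B_d(u, [w,v]_d − [v,w]_d) — if and only if ((A,[·,·]_A), (A*,[·,·]_{A*}), L_A*, L_A* − R_A*, L_{A*}*, L_{A*}* − R_{A*}*) is a matched pair of left-Alia algebras, where L_A(x)y = [x,y]_A = R_A(y)x, L_{A*}(a*)b* = [a*,b*]_{A*} = R_{A*}(b*)a*, and the stars denote the dual maps ⟨l*(x)u*, v⟩ = −⟨u*, l(x)v⟩. -/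
import Mathlib


/-- The symmetric Jacobi identity defining left-Alia algebras. -/
def SymJacobi {A : Type*} [Add A] (br : A → A → A) : Prop :=
  ∀ x y z : A,
    br (br x y) z + br (br y z) x + br (br z x) y
      = br (br y x) z + br (br z y) x + br (br x z) y

/-- The canonical bilinear form `B_d(x + a*, y + b*) = ⟨x, b*⟩ + ⟨a*, y⟩` on `A ⊕ A*`. -/
def canonForm {K A : Type*} [Field K] [AddCommGroup A] [Module K A]
    (p q : A × Module.Dual K A) : K :=
  q.2 p.1 + p.2 q.1

/-- The bracket on `A ⊕ A*` of the candidate matched pair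
`((A,[·,·]_A), (A*,[·,·]_{A*}), L_A*, L_A* − R_A*, L_{A*}*, L_{A*}* − R_{A*}*)`,
where the coadjoint-type actions of `A*` on `A` use the identification `A ≅ A**`. -/
noncomputable def coadjMatchedBracket {K A : Type*} [Field K]
    [AddCommGroup A] [Module K A] [FiniteDimensional K A]
    (brA : A →ₗ[K] A →ₗ[K] A)
    (brAs : Module.Dual K A →ₗ[K] Module.Dual K A →ₗ[K] Module.Dual K A)
    (p q : A × Module.Dual K A) : A × Module.Dual K A :=
  let e := Module.evalEquiv K A
  (brA p.1 q.1
      + (e.symm.toLinearMap ∘ₗ (-(brAs p.2).dualMap) ∘ₗ e.toLinearMap) q.1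
      + (e.symm.toLinearMap ∘ₗ (-(brAs q.2).dualMap + (brAs.flip q.2).dualMap)
          ∘ₗ e.toLinearMap) p.1,
    brAs p.2 q.2 + (-(brA p.1).dualMap) q.2
      + (-(brA q.1).dualMap + (brA.flip q.1).dualMap) p.2)

section Aux

variable {K A : Type*} [Field K] [AddCommGroup A] [Module K A] [FiniteDimensional K A]
  (brA : A →ₗ[K] A →ₗ[K] A)
  (brAs : Module.Dual K A →ₗ[K] Module.Dual K A →ₗ[K] Module.Dual K A)

lemma coadj_snd_apply (p q : A × Module.Dual K A) (z : A) :
    (coadjMatchedBracket brA brAs p q).2 z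
      = brAs p.2 q.2 z - q.2 (brA p.1 z) - p.2 (brA q.1 z) + p.2 (brA z q.1) := by
  simp [coadjMatchedBracket]
  ring

lemma coadj_fst_apply (p q : A × Module.Dual K A) (c : Module.Dual K A) :
    c (coadjMatchedBracket brA brAs p q).1
      = c (brA p.1 q.1) - brAs p.2 c q.1 - brAs q.2 c p.1 + brAs c q.2 p.1 := by
  simp [coadjMatchedBracket]
  ring

lemma pair_ext {p q : A × Module.Dual K A}
    (h1 : ∀ c : Module.Dual K A, c p.1 = c q.1)
    (h2 : ∀ z : A, p.2 z = q.2 z) : p = q := by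
  refine Prod.ext ?_ (LinearMap.ext h2)
  rw [← sub_eq_zero, ← Module.forall_dual_apply_eq_zero_iff K]
  intro c
  simp [h1 c]

/-- The matched-pair bracket as a bilinear map. -/
noncomputable def coadjBracketL :
    (A × Module.Dual K A) →ₗ[K] (A × Module.Dual K A) →ₗ[K] (A × Module.Dual K A) :=
  LinearMap.mk₂ K (coadjMatchedBracket brA brAs)
    (fun p p' q => by
      refine pair_ext (fun c => ?_) (fun z => ?_) <;>
        simp [coadj_fst_apply, coadj_snd_apply] <;> ring)
    (fun r p q => by
      refine pair_ext (fun c => ?_) (fun z => ?_) <;>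
        simp [coadj_fst_apply, coadj_snd_apply] <;> ring)
    (fun p q q' => by
      refine pair_ext (fun c => ?_) (fun z => ?_) <;>
        simp [coadj_fst_apply, coadj_snd_apply] <;> ring)
    (fun r p q => by
      refine pair_ext (fun c => ?_) (fun z => ?_) <;>
        simp [coadj_fst_apply, coadj_snd_apply] <;> ring)

@[simp] lemma coadjBracketL_apply (p q : A × Module.Dual K A) :
    coadjBracketL brA brAs p q = coadjMatchedBracket brA brAs p q := rfl

lemma coadj_pureA (x y : A) :
    coadjMatchedBracket brA brAs (x, 0) (y, 0) = (brA x y, 0) := by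
  refine pair_ext (fun c => ?_) (fun z => ?_) <;>
    simp [coadj_fst_apply, coadj_snd_apply]

lemma coadj_pureAs (a b : Module.Dual K A) :
    coadjMatchedBracket brA brAs (0, a) (0, b) = (0, brAs a b) := by
  refine pair_ext (fun c => ?_) (fun z => ?_) <;>
    simp [coadj_fst_apply, coadj_snd_apply]

lemma coadj_invariant (u v w : A × Module.Dual K A) :
    canonForm (coadjMatchedBracket brA brAs u v) w
      = canonForm u (coadjMatchedBracket brA brAs w v - coadjMatchedBracket brA brAs v w) := by
  simp only [canonForm, Prod.snd_sub, Prod.fst_sub, LinearMap.sub_apply, map_sub,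
    coadj_fst_apply, coadj_snd_apply]
  ring

lemma split_bilinear
    (f : (A × Module.Dual K A) →ₗ[K] (A × Module.Dual K A) →ₗ[K] (A × Module.Dual K A))
    (p q : A × Module.Dual K A) :
    f p q = f (p.1, 0) (q.1, 0) + f (p.1, 0) (0, q.2)
      + f (0, p.2) (q.1, 0) + f (0, p.2) (0, q.2) := by
  have hp : p = (p.1, (0 : Module.Dual K A)) + ((0 : A), p.2) := by
    ext <;> simp
  have hq : q = (q.1, (0 : Module.Dual K A)) + ((0 : A), q.2) := by
    ext <;> simp
  conv_lhs => rw [hp, hq]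
  simp only [map_add, LinearMap.add_apply]
  abel

end Aux

/-- Let `(A,[·,·]_A)` be a finite-dimensional left-Alia algebra and
`(A*,[·,·]_{A*})` a left-Alia algebra structure on the dual space.  There is a Manin
triple of left-Alia algebras `((A ⊕ A*, [·,·]_d, B_d), A, A*)` — a left-Alia bracket on
`A ⊕ A*` containing `A` and `A*` as subalgebras and making the canonical pairing `B_d`
invariant — iff `((A,[·,·]_A),(A*,[·,·]_{A*}), L_A*, L_A* − R_A*, L_{A*}*,
L_{A*}* − R_{A*}*)` is a matched pair of left-Alia algebras, i.e. the canonical bracket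
`coadjMatchedBracket` satisfies the symmetric Jacobi identity. -/
theorem maninTriple_iff_matchedPair {K A : Type*} [Field K]
    [AddCommGroup A] [Module K A] [FiniteDimensional K A]
    (brA : A →ₗ[K] A →ₗ[K] A) (hA : SymJacobi (fun x y : A => brA x y))
    (brAs : Module.Dual K A →ₗ[K] Module.Dual K A →ₗ[K] Module.Dual K A)
    (hAs : SymJacobi (fun a b : Module.Dual K A => brAs a b)) :
    (∃ brd : (A × Module.Dual K A) →ₗ[K] (A × Module.Dual K A) →ₗ[K]
        (A × Module.Dual K A),
      SymJacobi (fun p q => brd p q) ∧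
      (∀ x y : A, brd (x, 0) (y, 0) = (brA x y, 0)) ∧
      (∀ a b : Module.Dual K A, brd (0, a) (0, b) = (0, brAs a b)) ∧
      (∀ u v w : A × Module.Dual K A,
        canonForm (brd u v) w = canonForm u (brd w v - brd v w))) ↔
    SymJacobi (coadjMatchedBracket brA brAs) := by
  constructor
  · rintro ⟨brd, hJ, hAA, hss, hinv⟩
    -- the bracket on mixed pure elements is determined by invariance
    have hQ2 : ∀ (a : Module.Dual K A) (y z : A),
        (brd (0, a) (y, 0)).2 z = a (brA z y) - a (brA y z) := by
      intro a y z
      have h := hinv (0, a) (y, 0) (z, 0)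
      rw [hAA z y, hAA y z] at h
      simp [canonForm] at h
      exact h
    have hP2 : ∀ (y : A) (c : Module.Dual K A) (x : A),
        (brd (y, 0) (0, c)).2 x = - c (brA y x) := by
      intro y c x
      have h := hinv (x, 0) (y, 0) (0, c)
      rw [hAA x y] at h
      simp [canonForm] at h
      rw [hQ2 c y x] at h
      linear_combination h
    have hP1 : ∀ (x : A) (b c : Module.Dual K A),
        c ((brd (x, 0) (0, b)).1) = brAs c b x - brAs b c x := by
      intro x b c
      have h := hinv (x, 0) (0, b) (0, c)
      rw [hss c b, hss b c] at h
      simp [canonForm] at h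
      exact h
    have hQ1 : ∀ (a b : Module.Dual K A) (z : A),
        a ((brd (0, b) (z, 0)).1) = - brAs b a z := by
      intro a b z
      have h := hinv (0, a) (0, b) (z, 0)
      rw [hss a b] at h
      simp [canonForm] at h
      rw [hP1 z b a] at h
      linear_combination h
    -- hence brd agrees with the canonical bracket on pure elements
    have e1 : ∀ x y : A, brd (x, 0) (y, 0) = coadjMatchedBracket brA brAs (x, 0) (y, 0) := by
      intro x y
      rw [coadj_pureA, hAA]
    have e2 : ∀ a b : Module.Dual K A,
        brd (0, a) (0, b) = coadjMatchedBracket brA brAs (0, a) (0, b) := by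
      intro a b
      rw [coadj_pureAs, hss]
    have e3 : ∀ (x : A) (b : Module.Dual K A),
        brd (x, 0) (0, b) = coadjMatchedBracket brA brAs (x, 0) (0, b) := by
      intro x b
      refine pair_ext (fun c => ?_) (fun z => ?_)
      · rw [hP1 x b c, coadj_fst_apply]; simp; ring
      · rw [hP2 x b z, coadj_snd_apply]; simp
    have e4 : ∀ (b : Module.Dual K A) (z : A),
        brd (0, b) (z, 0) = coadjMatchedBracket brA brAs (0, b) (z, 0) := by
      intro b z
      refine pair_ext (fun c => ?_) (fun z' => ?_)
      · rw [hQ1 c b z, coadj_fst_apply]; simp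
      · rw [hQ2 b z z', coadj_snd_apply]; simp; ring
    have heq : ∀ p q : A × Module.Dual K A,
        brd p q = coadjMatchedBracket brA brAs p q := by
      intro p q
      rw [show coadjMatchedBracket brA brAs p q = coadjBracketL brA brAs p q from rfl,
        split_bilinear brd, split_bilinear (coadjBracketL brA brAs)]
      simp only [coadjBracketL_apply]
      rw [e1, e2, e3, e4]
    have : coadjMatchedBracket brA brAs = fun p q => brd p q :=
      funext fun p => funext fun q => (heq p q).symm
    rw [this]
    exact hJ
  · intro h
    refine ⟨coadjBracketL brA brAs, ?_, ?_, ?_, ?_⟩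
    · exact h
    · intro x y
      rw [coadjBracketL_apply, coadj_pureA]
    · intro a b
      rw [coadjBracketL_apply, coadj_pureAs]
    · intro u v w
      simp only [coadjBracketL_apply]
      exact coadj_invariant brA brAs u v w
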